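/- arXiv:1801.06366 — 3 statements merged into one kernel-verified Lean document; each statement's English description precedes it below -/
import Mathlib

section
/- Let T > 0, a, b ∈ L¹(t₀, t₀+T; ℝ) with b(t) ≥ 0 a.e., and 0 ≤ α < 1. If an absolutely continuous function w : [t₀, t₀+T] → ℝ₊ satisfies (1−α)·w′(t) ≤ a(t)·w(t) + b(t)·w(t)^α for a.e. t, then w(t)^{1−α} ≤ w(t₀)^{1−α}·exp(∫_{t₀}^t a(τ)dτ) + ∫_{t₀}^t exp(∫_s^t a(τ)dτ)·b(s) ds for all t ∈ [t₀, t₀+T]. -/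
/-!
For `ε > 0` put `A t = ∫_{t₀}^t a` and `v = (w + ε)^{1-α} e^{-A}`. Composing with maps that are
`C¹` on the (compact) ranges and multiplying keeps absolute continuity, so the fundamental theorem
of calculus for absolutely continuous functions applies to `v`. Multiplying the differential
inequality by `(w + ε)^{-α}` and using `w^α (w + ε)^{-α} ≤ 1` and `ε (w + ε)^{-α} ≤ ε^{1-α}` bounds
`v'` a.e. by `e^{-A} (b + |a| ε^{1-α})`. Integrating, letting `ε → 0` (`ε^{1-α} → 0` as `α < 1`) and
multiplying by `e^{A t}` gives the claim. The regularisation is needed because `x ↦ x^{1-α}` is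
not Lipschitz at `0`, so `w^{1-α}` itself need not be absolutely continuous.
-/

open MeasureTheory Set Filter Topology NNReal intervalIntegral

theorem AbsolutelyContinuousOnInterval.comp_lipschitzOnWith {X Y : Type*} [PseudoMetricSpace X]
    [PseudoMetricSpace Y] {f : ℝ → X} {φ : X → Y} {K : ℝ≥0} {s : Set X} {a b : ℝ}
    (hφ : LipschitzOnWith K φ s) (hf : AbsolutelyContinuousOnInterval f a b)
    (hfs : MapsTo f (uIcc a b) s) : AbsolutelyContinuousOnInterval (φ ∘ f) a b := by
  have hK := (Tendsto.const_mul (K : ℝ) hf).trans_eq (congrArg _ (mul_zero _))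
  refine squeeze_zero' (Eventually.of_forall fun _ ↦ Finset.sum_nonneg fun _ _ ↦ dist_nonneg)
    (eventually_inf_principal.2 (Eventually.of_forall fun E hE ↦ ?_)) hK
  rw [Finset.mul_sum]
  exact Finset.sum_le_sum fun i hi ↦
    hφ.dist_le_mul _ (hfs (hE.1 i hi).1) _ (hfs (hE.1 i hi).2)

theorem AbsolutelyContinuousOnInterval.comp_contDiffOn {f φ : ℝ → ℝ} {a b m M : ℝ}
    (hφ : ContDiffOn ℝ 1 φ (Icc m M)) (hf : AbsolutelyContinuousOnInterval f a b)
    (hfs : MapsTo f (uIcc a b) (Icc m M)) : AbsolutelyContinuousOnInterval (φ ∘ f) a b := by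
  obtain ⟨K, hK⟩ := hφ.exists_lipschitzOnWith one_ne_zero (convex_Icc m M) isCompact_Icc
  exact hf.comp_lipschitzOnWith hK hfs

theorem AbsolutelyContinuousOnInterval.sub_le_integral_of_deriv_le {f g : ℝ → ℝ} {c d : ℝ}
    (hcd : c ≤ d) (hf : AbsolutelyContinuousOnInterval f c d)
    (hg : IntervalIntegrable g volume c d)
    (h : ∀ᵐ x ∂volume.restrict (Icc c d), deriv f x ≤ g x) :
    f d - f c ≤ ∫ x in c..d, g x := by
  rw [← hf.integral_deriv_eq_sub]
  exact integral_mono_ae_restrict hcd hf.intervalIntegrable_deriv hg h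

section Gronwall

variable {c d α ε : ℝ} {a b w w' : ℝ → ℝ}

theorem absolutelyContinuousOnInterval_rpow_mul_exp_neg_integral (hcd : c ≤ d) (hε : 0 < ε)
    (ha : IntervalIntegrable a volume c d) (hw' : IntervalIntegrable w' volume c d)
    (hw0 : ∀ t ∈ Icc c d, 0 ≤ w c + ∫ s in c..t, w' s) :
    AbsolutelyContinuousOnInterval (fun t ↦ (w c + (∫ s in c..t, w' s) + ε) ^ (1 - α) *
      Real.exp (-∫ s in c..t, a s)) c d := by
  have hI := hw'.absolutelyContinuousOnInterval_intervalIntegral (c := c) left_mem_uIcc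
  have hJ := ha.absolutelyContinuousOnInterval_intervalIntegral (c := c) left_mem_uIcc
  obtain ⟨M, hM⟩ := hI.exists_bound
  obtain ⟨R, hR⟩ := hJ.exists_bound
  simp only [uIcc_of_le hcd, Real.norm_eq_abs] at hM hR
  have hφ : ContDiffOn ℝ 1 (fun x ↦ (w c + x + ε) ^ (1 - α)) (Icc (-w c) M) := fun x hx ↦
    ((contDiffAt_const.add contDiffAt_id).add contDiffAt_const |>.rpow_const_of_ne
      (by simp only [id]; linarith [hx.1])).contDiffWithinAt
  have hψ : ContDiffOn ℝ 1 (fun y ↦ Real.exp (-y)) (Icc (-R) R) :=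
    (Real.contDiff_exp.comp contDiff_neg).contDiffOn
  have hImaps : MapsTo (fun t ↦ ∫ s in c..t, w' s) (uIcc c d) (Icc (-w c) M) := fun t ht ↦ by
    rw [uIcc_of_le hcd] at ht
    exact ⟨by linarith [hw0 t ht], (le_abs_self _).trans (hM t ht)⟩
  have hJmaps : MapsTo (fun t ↦ ∫ s in c..t, a s) (uIcc c d) (Icc (-R) R) := fun t ht ↦ by
    rw [uIcc_of_le hcd] at ht
    exact abs_le.1 (hR t ht)
  have hφI := hI.comp_contDiffOn hφ hImaps
  have hψJ := hJ.comp_contDiffOn hψ hJmaps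
  exact hφI.fun_mul hψJ

theorem one_sub_mul_rpow_neg_mul_le_of_le {x y p q : ℝ} (hα : 0 ≤ α) (hε : 0 < ε)
    (hx : 0 ≤ x) (hq : 0 ≤ q) (h : (1 - α) * y ≤ p * x + q * x ^ α) :
    (1 - α) * (x + ε) ^ (-α) * y ≤ p * (x + ε) ^ (1 - α) + q + |p| * ε ^ (1 - α) := by
  have hxε : 0 < x + ε := by linarith
  set u := (x + ε) ^ (-α) with hu
  have hu0 : 0 < u := Real.rpow_pos_of_pos hxε _
  have hsplit : ∀ z : ℝ, 0 < z → z ^ (1 - α) = z * z ^ (-α) := fun z hz ↦ by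
    rw [sub_eq_add_neg, Real.rpow_add hz, Real.rpow_one]
  have hu_le : u ≤ ε ^ (-α) := Real.rpow_le_rpow_of_nonpos hε (by linarith) (neg_nonpos.2 hα)
  have hxu : x ^ α * u ≤ 1 := by
    calc x ^ α * u ≤ (x + ε) ^ α * u := by gcongr; linarith
      _ = 1 := by rw [hu, Real.rpow_neg hxε.le, mul_inv_cancel₀ (by positivity)]
  have hpu : -p * (ε * u) ≤ |p| * (ε * ε ^ (-α)) :=
    mul_le_mul (neg_le_abs p) (by gcongr) (by positivity) (abs_nonneg p)
  calc (1 - α) * u * y = u * ((1 - α) * y) := by ring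
    _ ≤ u * (p * x + q * x ^ α) := by gcongr
    _ = p * ((x + ε) * u) - p * (ε * u) + q * (x ^ α * u) := by ring
    _ ≤ p * ((x + ε) * u) + |p| * (ε * ε ^ (-α)) + q * 1 := by gcongr; linarith
    _ = _ := by rw [hsplit _ hxε, hsplit _ hε, mul_one]; ring

theorem rpow_add_mul_exp_neg_integral_sub_le (hcd : c ≤ d)
    (hα : 0 ≤ α) (hε : 0 < ε) (ha : IntervalIntegrable a volume c d)
    (hb : IntervalIntegrable b volume c d) (hw' : IntervalIntegrable w' volume c d)
    (hac : ∀ t ∈ Icc c d, w t = w c + ∫ s in c..t, w' s) (hw0 : ∀ t ∈ Icc c d, 0 ≤ w t)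
    (hb0 : ∀ᵐ t ∂volume.restrict (Icc c d), 0 ≤ b t)
    (hineq : ∀ᵐ t ∂volume.restrict (Icc c d), (1 - α) * w' t ≤ a t * w t + b t * w t ^ α) :
    (w d + ε) ^ (1 - α) * Real.exp (-∫ s in c..d, a s) - (w c + ε) ^ (1 - α) ≤
      (∫ s in c..d, Real.exp (-∫ τ in c..s, a τ) * b s) +
        ε ^ (1 - α) * ∫ s in c..d, Real.exp (-∫ τ in c..s, a τ) * |a s| := by
  set I : ℝ → ℝ := fun t ↦ ∫ s in c..t, w' s
  set J : ℝ → ℝ := fun t ↦ ∫ s in c..t, a s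
  have hv := absolutelyContinuousOnInterval_rpow_mul_exp_neg_integral (α := α) hcd hε ha hw'
    fun t ht ↦ hac t ht ▸ hw0 t ht
  have hE : ContinuousOn (fun t ↦ Real.exp (-J t)) (uIcc c d) :=
    Real.continuous_exp.comp_continuousOn
      (ha.absolutelyContinuousOnInterval_intervalIntegral left_mem_uIcc).continuousOn.neg
  have hderiv :
      ∀ᵐ x ∂volume.restrict (Icc c d), HasDerivAt I (w' x) x ∧ HasDerivAt J (a x) x := by
    rw [ae_restrict_iff' measurableSet_Icc]
    filter_upwards [hw'.ae_hasDerivAt_integral, ha.ae_hasDerivAt_integral] with x hI hJ hx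
    rw [← uIcc_of_le hcd] at hx
    exact ⟨hI hx c left_mem_uIcc, hJ hx c left_mem_uIcc⟩
  have key := hv.sub_le_integral_of_deriv_le hcd
    ((hb.add (ha.abs.mul_const (ε ^ (1 - α)))).continuousOn_mul hE) ?_
  · have hsplit : ∫ s in c..d, Real.exp (-J s) * (b s + |a s| * ε ^ (1 - α)) =
        (∫ s in c..d, Real.exp (-J s) * b s) +
          ε ^ (1 - α) * ∫ s in c..d, Real.exp (-J s) * |a s| := by
      rw [← intervalIntegral.integral_const_mul, ← integral_add (hb.continuousOn_mul hE)
        ((ha.abs.continuousOn_mul hE).const_mul _)]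
      exact integral_congr fun s _ ↦ by ring
    simpa [← hac d ⟨hcd, le_rfl⟩, hsplit] using key
  filter_upwards [hb0, hineq, hderiv, ae_restrict_mem measurableSet_Icc]
    with x hbx hx ⟨hI, hJ⟩ hxI
  have hWx : w c + I x = w x := (hac x hxI).symm
  have hWε : 0 < w c + I x + ε := by linarith [hw0 x hxI]
  have hv' : HasDerivAt (fun t ↦ (w c + I t + ε) ^ (1 - α) * Real.exp (-J t))
      (w' x * (1 - α) * (w c + I x + ε) ^ (1 - α - 1) * Real.exp (-J x) +
        (w c + I x + ε) ^ (1 - α) * (Real.exp (-J x) * -a x)) x :=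
    (((hI.const_add (w c)).add_const ε).rpow_const (Or.inl hWε.ne')).mul hJ.neg.exp
  rw [hv'.deriv, sub_sub_cancel_left]
  have hpt := one_sub_mul_rpow_neg_mul_le_of_le hα hε (hw0 x hxI) hbx hx
  rw [← hWx] at hpt
  linarith [mul_le_mul_of_nonneg_left hpt (Real.exp_pos (-J x)).le]

theorem rpow_mul_exp_neg_integral_sub_le (hcd : c ≤ d)
    (hα0 : 0 ≤ α) (hα1 : α < 1) (ha : IntervalIntegrable a volume c d)
    (hb : IntervalIntegrable b volume c d) (hw' : IntervalIntegrable w' volume c d)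
    (hac : ∀ t ∈ Icc c d, w t = w c + ∫ s in c..t, w' s) (hw0 : ∀ t ∈ Icc c d, 0 ≤ w t)
    (hb0 : ∀ᵐ t ∂volume.restrict (Icc c d), 0 ≤ b t)
    (hineq : ∀ᵐ t ∂volume.restrict (Icc c d), (1 - α) * w' t ≤ a t * w t + b t * w t ^ α) :
    w d ^ (1 - α) * Real.exp (-∫ s in c..d, a s) - w c ^ (1 - α) ≤
      ∫ s in c..d, Real.exp (-∫ τ in c..s, a τ) * b s := by
  have hp : Continuous fun x : ℝ ↦ x ^ (1 - α) := Real.continuous_rpow_const (by linarith)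
  have hlim (x : ℝ) : Tendsto (fun ε ↦ (x + ε) ^ (1 - α)) (𝓝[>] 0) (𝓝 (x ^ (1 - α))) :=
    ((hp.comp (continuous_const_add x)).tendsto' 0 _ (by simp)).mono_left nhdsWithin_le_nhds
  have hL := ((hlim (w d)).mul_const (Real.exp (-∫ s in c..d, a s))).sub (hlim (w c))
  have hR : Tendsto (fun ε ↦ (∫ s in c..d, Real.exp (-∫ τ in c..s, a τ) * b s) +
      ε ^ (1 - α) * ∫ s in c..d, Real.exp (-∫ τ in c..s, a τ) * |a s|) (𝓝[>] 0)
      (𝓝 (∫ s in c..d, Real.exp (-∫ τ in c..s, a τ) * b s)) := by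
    simpa [Real.zero_rpow (by linarith : 1 - α ≠ 0)] using tendsto_const_nhds.add
      ((hlim 0).mul_const (∫ s in c..d, Real.exp (-∫ τ in c..s, a τ) * |a s|))
  exact le_of_tendsto_of_tendsto hL hR <| eventually_nhdsWithin_of_forall fun ε hε ↦
    rpow_add_mul_exp_neg_integral_sub_le hcd hα0 hε ha hb hw' hac hw0 hb0 hineq

theorem rpow_le_mul_exp_integral_add_integral (hcd : c ≤ d)
    (hα0 : 0 ≤ α) (hα1 : α < 1) (ha : IntervalIntegrable a volume c d)
    (hb : IntervalIntegrable b volume c d) (hw' : IntervalIntegrable w' volume c d)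
    (hac : ∀ t ∈ Icc c d, w t = w c + ∫ s in c..t, w' s) (hw0 : ∀ t ∈ Icc c d, 0 ≤ w t)
    (hb0 : ∀ᵐ t ∂volume.restrict (Icc c d), 0 ≤ b t)
    (hineq : ∀ᵐ t ∂volume.restrict (Icc c d), (1 - α) * w' t ≤ a t * w t + b t * w t ^ α) :
    w d ^ (1 - α) ≤ w c ^ (1 - α) * Real.exp (∫ s in c..d, a s) +
      ∫ s in c..d, Real.exp (∫ τ in s..d, a τ) * b s := by
  set A := ∫ s in c..d, a s
  have h := rpow_mul_exp_neg_integral_sub_le hcd hα0 hα1 ha hb hw' hac hw0 hb0 hineq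
  have hexp : ∫ s in c..d, Real.exp (∫ τ in s..d, a τ) * b s =
      Real.exp A * ∫ s in c..d, Real.exp (-∫ τ in c..s, a τ) * b s := by
    rw [← intervalIntegral.integral_const_mul]
    refine integral_congr fun s hs ↦ ?_
    rw [← integral_interval_sub_left ha (ha.mono_set (uIcc_subset_uIcc left_mem_uIcc hs)),
      sub_eq_add_neg, Real.exp_add, mul_assoc]
  calc w d ^ (1 - α) = (w d ^ (1 - α) * Real.exp (-A)) * Real.exp A := by
        rw [mul_assoc, ← Real.exp_add, neg_add_cancel, Real.exp_zero, mul_one]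
    _ ≤ (w c ^ (1 - α) + ∫ s in c..d, Real.exp (-∫ τ in c..s, a τ) * b s) * Real.exp A := by
        gcongr; linarith
    _ = _ := by rw [hexp]; ring

end Gronwall

theorem stmt1_general (t₀ T : ℝ) (a b : ℝ → ℝ)
    (ha : IntegrableOn a (Set.Icc t₀ (t₀ + T)))
    (hb : IntegrableOn b (Set.Icc t₀ (t₀ + T)))
    (hb0 : ∀ᵐ t ∂(volume.restrict (Set.Icc t₀ (t₀ + T))), 0 ≤ b t)
    (α : ℝ) (hα0 : 0 ≤ α) (hα1 : α < 1)
    (w w' : ℝ → ℝ)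
    (hw0 : ∀ t ∈ Set.Icc t₀ (t₀ + T), 0 ≤ w t)
    (hw'int : IntegrableOn w' (Set.Icc t₀ (t₀ + T)))
    (hac : ∀ t ∈ Set.Icc t₀ (t₀ + T), w t = w t₀ + ∫ s in t₀..t, w' s)
    (hineq : ∀ᵐ t ∂(volume.restrict (Set.Icc t₀ (t₀ + T))),
      (1 - α) * w' t ≤ a t * w t + b t * (w t) ^ α) :
    ∀ t ∈ Set.Icc t₀ (t₀ + T),
      (w t) ^ (1 - α) ≤ (w t₀) ^ (1 - α) * Real.exp (∫ τ in t₀..t, a τ)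
        + ∫ s in t₀..t, Real.exp (∫ τ in s..t, a τ) * b s := by
  intro t ht
  have hsub : Icc t₀ t ⊆ Icc t₀ (t₀ + T) := Icc_subset_Icc_right ht.2
  have hii {f : ℝ → ℝ} (hf : IntegrableOn f (Icc t₀ (t₀ + T))) :
      IntervalIntegrable f volume t₀ t :=
    (hf.mono_set (uIcc_subset_Icc ⟨le_rfl, ht.1.trans ht.2⟩ ht)).intervalIntegrable
  exact rpow_le_mul_exp_integral_add_integral ht.1 hα0 hα1 (hii ha) (hii hb) (hii hw'int)
    (fun s hs ↦ hac s (hsub hs)) (fun s hs ↦ hw0 s (hsub hs))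
    (ae_restrict_of_ae_restrict_of_subset hsub hb0)
    (ae_restrict_of_ae_restrict_of_subset hsub hineq)

/-- Generalized Gronwall inequality (Lemma 2.1 of the paper): if an absolutely continuous
nonnegative function `w` (encoded via its a.e. derivative `w'` and the fundamental theorem
of calculus) satisfies `(1−α) w′(t) ≤ a(t) w(t) + b(t) w(t)^α` a.e. on `[t₀, t₀+T]`,
with `a, b` integrable, `b ≥ 0` a.e. and `0 ≤ α < 1`, then
`w(t)^{1−α} ≤ w(t₀)^{1−α} e^{∫_{t₀}^t a} + ∫_{t₀}^t e^{∫_s^t a} b(s) ds`. -/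
theorem stmt1 (t₀ T : ℝ) (hT : 0 < T) (a b : ℝ → ℝ)
    (ha : IntegrableOn a (Set.Icc t₀ (t₀ + T)))
    (hb : IntegrableOn b (Set.Icc t₀ (t₀ + T)))
    (hb0 : ∀ᵐ t ∂(volume.restrict (Set.Icc t₀ (t₀ + T))), 0 ≤ b t)
    (α : ℝ) (hα0 : 0 ≤ α) (hα1 : α < 1)
    (w w' : ℝ → ℝ)
    (hw0 : ∀ t ∈ Set.Icc t₀ (t₀ + T), 0 ≤ w t)
    (hw'int : IntegrableOn w' (Set.Icc t₀ (t₀ + T)))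
    (hw'deriv : ∀ᵐ t ∂(volume.restrict (Set.Icc t₀ (t₀ + T))), HasDerivAt w (w' t) t)
    (hac : ∀ t ∈ Set.Icc t₀ (t₀ + T), w t = w t₀ + ∫ s in t₀..t, w' s)
    (hineq : ∀ᵐ t ∂(volume.restrict (Set.Icc t₀ (t₀ + T))),
      (1 - α) * w' t ≤ a t * w t + b t * (w t) ^ α) :
    ∀ t ∈ Set.Icc t₀ (t₀ + T),
      (w t) ^ (1 - α) ≤ (w t₀) ^ (1 - α) * Real.exp (∫ τ in t₀..t, a τ)
        + ∫ s in t₀..t, Real.exp (∫ τ in s..t, a τ) * b s :=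
  stmt1_general t₀ T a b ha hb hb0 α hα0 hα1 w w' hw0 hw'int hac hineq
end

section
/- Let S ⊂ ℝⁿ be a nonempty closed set and x ∈ ℝⁿ \ S. Then every limiting (Mordukhovich) subgradient of the distance function d_S at x belongs to the set {(x − s)/d_S(x) : s ∈ Π_S(x)}. -/
/-!
Let `ξ` be a proximal subgradient of `d_S` at `x` and `s` a nearest point of `x` in `S`.
Since `d_S` is 1-Lipschitz, `‖ξ‖ ≤ 1`; since `d_S` decreases at unit rate from `x` towards `s`,
`⟪ξ, x - s⟫ ≥ d_S(x) = ‖x - s‖`. Equality in Cauchy–Schwarz then forces `x - s = d_S(x) • ξ`.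
For a limiting subgradient `ξ = lim ξₖ`, the nearest points `xₖ - d_S(xₖ) • ξₖ` converge to
`x - d_S(x) • ξ`, which therefore lies in `S` at distance `d_S(x)` from `x`.
-/

open Filter Topology
open scoped RealInnerProductSpace

variable {n : ℕ}

/-- The proximal subdifferential of a real-valued function:
`ξ ∈ ∂_P φ(x)` iff `φ(y) ≥ φ(x) + ⟪ξ, y−x⟫ − σ‖y−x‖²` for `y` near `x`
(equivalently the liminf in the definition is `> −∞`). -/
def proxSubdiff (φ : EuclideanSpace ℝ (Fin n) → ℝ) (x : EuclideanSpace ℝ (Fin n)) :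
    Set (EuclideanSpace ℝ (Fin n)) :=
  {ξ | ∃ σ > (0 : ℝ), ∃ δ > (0 : ℝ), ∀ y, ‖y - x‖ ≤ δ →
    φ x + ⟪ξ, y - x⟫ - σ * ‖y - x‖ ^ 2 ≤ φ y}

/-- The limiting (Mordukhovich) subdifferential: limits of proximal subgradients
`ξₖ ∈ ∂_P φ(xₖ)` with `xₖ → x` and `φ(xₖ) → φ(x)`. -/
def limitingSubdiff (φ : EuclideanSpace ℝ (Fin n) → ℝ) (x : EuclideanSpace ℝ (Fin n)) :
    Set (EuclideanSpace ℝ (Fin n)) :=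
  {ξ | ∃ (xs ξs : ℕ → EuclideanSpace ℝ (Fin n)),
    (∀ k, ξs k ∈ proxSubdiff φ (xs k)) ∧ Tendsto xs atTop (𝓝 x) ∧
    Tendsto (fun k => φ (xs k)) atTop (𝓝 (φ x)) ∧ Tendsto ξs atTop (𝓝 ξ)}

open Metric
open scoped NNReal

lemma eq_norm_smul_of_norm_le_inner {E : Type*} [NormedAddCommGroup E] [InnerProductSpace ℝ E]
    {u w : E} (hu : ‖u‖ ≤ 1) (h : ‖w‖ ≤ ⟪u, w⟫) : w = ‖w‖ • u := by
  have hsq : ‖w - ‖w‖ • u‖ ^ 2 ≤ 0 := by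
    rw [norm_sub_sq_real, norm_smul, real_inner_smul_right, real_inner_comm, Real.norm_eq_abs,
      abs_norm]
    have hu2 : ‖u‖ ^ 2 ≤ 1 := by nlinarith [norm_nonneg u]
    nlinarith [mul_le_mul_of_nonneg_left h (norm_nonneg w),
      mul_le_mul_of_nonneg_left hu2 (sq_nonneg ‖w‖)]
  exact sub_eq_zero.mp (norm_eq_zero.mp (by nlinarith [norm_nonneg (w - ‖w‖ • u)]))

section ProximalSubgradient

variable {φ : EuclideanSpace ℝ (Fin n) → ℝ} {x ξ v : EuclideanSpace ℝ (Fin n)}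

lemma inner_le_of_mem_proxSubdiff {c : ℝ} (hξ : ξ ∈ proxSubdiff φ x)
    (hφ : ∀ᶠ t in 𝓝[>] (0 : ℝ), φ (x + t • v) ≤ φ x + t * c) : ⟪ξ, v⟫ ≤ c := by
  obtain ⟨σ, -, δ, hδ, hprox⟩ := hξ
  have hsmall : ∀ᶠ t in 𝓝[>] (0 : ℝ), t * ‖v‖ ≤ δ := by
    have : Tendsto (fun t : ℝ => t * ‖v‖) (𝓝 0) (𝓝 0) :=
      (continuous_mul_const ‖v‖).tendsto' 0 0 (zero_mul _)
    exact nhdsWithin_le_nhds (this.eventually (eventually_le_nhds hδ))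
  have hbound : ∀ᶠ t in 𝓝[>] (0 : ℝ), ⟪ξ, v⟫ ≤ c + σ * ‖v‖ ^ 2 * t := by
    filter_upwards [hφ, hsmall, self_mem_nhdsWithin] with t hφt hδt (ht : 0 < t)
    have hnorm : ‖(x + t • v) - x‖ = t * ‖v‖ := by
      rw [add_sub_cancel_left, norm_smul, Real.norm_of_nonneg ht.le]
    have := (hprox (x + t • v) (hnorm ▸ hδt)).trans hφt
    rw [hnorm, add_sub_cancel_left, real_inner_smul_right] at this
    nlinarith
  have hlim : Tendsto (fun t : ℝ => c + σ * ‖v‖ ^ 2 * t) (𝓝[>] 0) (𝓝 c) := by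
    refine tendsto_nhdsWithin_of_tendsto_nhds ((by fun_prop : Continuous _).tendsto' 0 c ?_)
    simp
  exact ge_of_tendsto hlim hbound

lemma norm_le_of_mem_proxSubdiff {K : ℝ≥0} (hφ : LipschitzWith K φ)
    (hξ : ξ ∈ proxSubdiff φ x) : ‖ξ‖ ≤ K := by
  have hinner : ⟪ξ, ξ⟫ ≤ K * ‖ξ‖ := by
    refine inner_le_of_mem_proxSubdiff hξ (eventually_nhdsWithin_of_forall fun t (ht : 0 < t) => ?_)
    have := (abs_sub_le_iff.mp (hφ.dist_le_mul (x + t • ξ) x)).1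
    rw [dist_self_add_left, norm_smul, Real.norm_of_nonneg ht.le] at this
    linarith
  rw [real_inner_self_eq_norm_sq] at hinner
  rcases (norm_nonneg ξ).eq_or_lt with h0 | hpos
  · rw [← h0]; exact K.coe_nonneg
  · nlinarith

end ProximalSubgradient

lemma sub_eq_infDist_smul_of_mem_proxSubdiff {S : Set (EuclideanSpace ℝ (Fin n))}
    {x s ξ : EuclideanSpace ℝ (Fin n)} (hs : s ∈ S) (hxs : dist x s = infDist x S)
    (hξ : ξ ∈ proxSubdiff (infDist · S) x) : x - s = infDist x S • ξ := by
  have hnorm : ‖x - s‖ = infDist x S := by rw [← dist_eq_norm, hxs]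
  have htoward : ⟪ξ, s - x⟫ ≤ -infDist x S := by
    refine inner_le_of_mem_proxSubdiff hξ ?_
    filter_upwards [self_mem_nhdsWithin, Ioo_mem_nhdsGT one_pos] with t (ht : 0 < t) ht1
    calc infDist (x + t • (s - x)) S ≤ dist (x + t • (s - x)) s := infDist_le_dist_of_mem hs
      _ = ‖(1 - t) • (x - s)‖ := by rw [dist_eq_norm]; congr 1; module
      _ = infDist x S + t * -infDist x S := by
        rw [norm_smul, Real.norm_of_nonneg (by linarith [ht1.2]), hnorm]; ring
  have hinner : ‖x - s‖ ≤ ⟪ξ, x - s⟫ := by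
    rw [hnorm, ← neg_sub s x, inner_neg_right]; linarith
  have hunit := norm_le_of_mem_proxSubdiff (lipschitz_infDist_pt S) hξ
  rw [← hnorm]
  exact eq_norm_smul_of_norm_le_inner (by simpa using hunit) hinner

/-- Every limiting subgradient of the distance function `d_S` at `x ∉ S` has the form
`(x − s)/d_S(x)` with `s ∈ Π_S(x)`. -/
theorem stmt5 (S : Set (EuclideanSpace ℝ (Fin n))) (hS : S.Nonempty) (hcl : IsClosed S)
    (x : EuclideanSpace ℝ (Fin n)) (hx : x ∉ S) :
    limitingSubdiff (fun y => Metric.infDist y S) x ⊆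
      {ξ | ∃ s ∈ S, dist x s = Metric.infDist x S ∧
        ξ = (Metric.infDist x S)⁻¹ • (x - s)} := by
  rintro ξ ⟨xs, ξs, hprox, hxs, hdist, hξs⟩
  have hd : infDist x S ≠ 0 := ((hcl.notMem_iff_infDist_pos hS).mp hx).ne'
  choose ps hps_mem hps_dist using fun k => hcl.exists_infDist_eq_dist hS (xs k)
  have hps : ps = fun k => xs k - infDist (xs k) S • ξs k := funext fun k => by
    rw [← sub_eq_infDist_smul_of_mem_proxSubdiff (hps_mem k) (hps_dist k).symm (hprox k),
      sub_sub_cancel]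
  have hlim : Tendsto ps atTop (𝓝 (x - infDist x S • ξ)) := hps ▸ hxs.sub (hdist.smul hξs)
  refine ⟨x - infDist x S • ξ, hcl.mem_of_tendsto hlim (Eventually.of_forall hps_mem), ?_, ?_⟩
  · exact tendsto_nhds_unique (hxs.dist hlim) (hdist.congr hps_dist)
  · rw [sub_sub_cancel, smul_smul, inv_mul_cancel₀ hd, one_smul]
end

section
/- Let V : ℝⁿ → ℝ ∪ {+∞} be proper lsc, x₀ ∈ dom V, a ≥ 0, and ξ ∈ ∂_{P,∞} V(x₀), i.e. (ξ, 0) ∈ N^P_{epi V}(x₀, V(x₀)). Suppose x : [0,∞) → ℝⁿ is continuous with x(0) = x₀, right-differentiable at 0 with derivative d, and satisfies V(x(t)) ≤ e^{−at} V(x₀) for all t ≥ 0. Then ⟨ξ, d⟩ ≤ 0. -/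
open Filter Topology
open scoped RealInnerProductSpace

/-- The proximal normal cone to a set `C` at `p`. -/
def proxNormalCone {H : Type*} [NormedAddCommGroup H] [InnerProductSpace ℝ H]
    (C : Set H) (p : H) : Set H :=
  {ζ | ∃ σ > (0 : ℝ), ∀ q ∈ C, ⟪ζ, q - p⟫ ≤ σ * ‖q - p‖ ^ 2}

/-! The curve `t ↦ (x t, e^{-at} V x₀)` stays in the epigraph and starts at `(x₀, V x₀)`, so the
proximal normal inequality gives `⟪(ξ, 0), γ t - γ 0⟫ ≤ σ ‖γ t - γ 0‖²`. Dividing by `t > 0`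
and letting `t → 0⁺`, the left side tends to `⟪(ξ, 0), γ'(0)⟫ = ⟪ξ, d⟫` while the right side is
`O(t)`. -/

theorem inner_le_zero_of_mem_proxNormalCone_of_hasDerivWithinAt
    {H : Type*} [NormedAddCommGroup H] [InnerProductSpace ℝ H]
    {C : Set H} {p ζ v : H} (hζ : ζ ∈ proxNormalCone C p) {γ : ℝ → H} (hγ0 : γ 0 = p)
    (hγC : ∀ t, 0 ≤ t → γ t ∈ C) (hγ : HasDerivWithinAt γ v (Set.Ici 0) 0) :
    ⟪ζ, v⟫ ≤ 0 := by
  obtain ⟨σ, -, hσ⟩ := hζ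
  have hslope : Tendsto (slope γ 0) (𝓝[>] 0) (𝓝 v) := by
    simpa using hasDerivWithinAt_iff_tendsto_slope.mp hγ
  have hlhs : Tendsto (fun t => ⟪ζ, slope γ 0 t⟫) (𝓝[>] 0) (𝓝 ⟪ζ, v⟫) :=
    tendsto_const_nhds.inner hslope
  have hrhs : Tendsto (fun t => σ * (t * ‖slope γ 0 t‖ ^ 2)) (𝓝[>] 0) (𝓝 0) := by
    simpa using ((tendsto_nhdsWithin_of_tendsto_nhds tendsto_id).mul
      (hslope.norm.pow 2)).const_mul σ
  have hbound : ∀ᶠ t in 𝓝[>] 0, ⟪ζ, slope γ 0 t⟫ ≤ σ * (t * ‖slope γ 0 t‖ ^ 2) := by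
    filter_upwards [self_mem_nhdsWithin] with t (ht : 0 < t)
    have h := hσ (γ t) (hγC t ht.le)
    rw [slope_def_module, hγ0, sub_zero, real_inner_smul_right, norm_smul, mul_pow,
      Real.norm_eq_abs, abs_inv, abs_of_pos ht]
    calc t⁻¹ * ⟪ζ, γ t - p⟫ ≤ t⁻¹ * (σ * ‖γ t - p‖ ^ 2) := by gcongr
      _ = σ * (t * (t⁻¹ ^ 2 * ‖γ t - p‖ ^ 2)) := by field_simp
  exact le_of_tendsto_of_tendsto hlhs hrhs hbound

theorem inner_le_zero_of_mem_proxNormalCone_of_hasDerivWithinAt_prod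
    {E : Type*} [NormedAddCommGroup E] [InnerProductSpace ℝ E]
    {C : Set (WithLp 2 (E × ℝ))} {ζ : WithLp 2 (E × ℝ)} {x : ℝ → E} {w : ℝ → ℝ} {d : E} {w' : ℝ}
    (hζ : ζ ∈ proxNormalCone C (WithLp.toLp 2 (x 0, w 0)))
    (hC : ∀ t, 0 ≤ t → WithLp.toLp 2 (x t, w t) ∈ C)
    (hx : HasDerivWithinAt x d (Set.Ici 0) 0) (hw : HasDerivWithinAt w w' (Set.Ici 0) 0) :
    ⟪ζ.fst, d⟫ + ζ.snd * w' ≤ 0 := by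
  have hγ : HasDerivWithinAt (fun t => WithLp.toLp 2 (x t, w t)) (WithLp.toLp 2 (d, w'))
      (Set.Ici 0) 0 :=
    (WithLp.prodContinuousLinearEquiv 2 ℝ E ℝ).symm.hasFDerivAt.comp_hasDerivWithinAt 0
      (hx.prodMk hw)
  simpa [WithLp.prod_inner_apply, mul_comm] using
    inner_le_zero_of_mem_proxNormalCone_of_hasDerivWithinAt hζ rfl hC hγ

theorem stmt16_general {n : ℕ} (V : EuclideanSpace ℝ (Fin n) → EReal)
    (x₀ : EuclideanSpace ℝ (Fin n))
    (a : ℝ)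
    (Epi : Set (WithLp 2 (EuclideanSpace ℝ (Fin n) × ℝ)))
    (hEpi : ∀ q, q ∈ Epi ↔ V ((WithLp.equiv 2 _ q).1) ≤ (((WithLp.equiv 2 _ q).2 : ℝ) : EReal))
    (P : WithLp 2 (EuclideanSpace ℝ (Fin n) × ℝ))
    (hP1 : (WithLp.equiv 2 _ P).1 = x₀) (hP2 : (WithLp.equiv 2 _ P).2 = (V x₀).toReal)
    (ξ : EuclideanSpace ℝ (Fin n))
    (Z : WithLp 2 (EuclideanSpace ℝ (Fin n) × ℝ))
    (hZ1 : (WithLp.equiv 2 _ Z).1 = ξ) (hZ2 : (WithLp.equiv 2 _ Z).2 = 0)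
    (hξ : Z ∈ proxNormalCone Epi P)
    (x : ℝ → EuclideanSpace ℝ (Fin n)) (hx0 : x 0 = x₀)
    (d : EuclideanSpace ℝ (Fin n)) (hd : HasDerivWithinAt x d (Set.Ici 0) 0)
    (hlyap : ∀ t : ℝ, 0 ≤ t →
      V (x t) ≤ ((Real.exp (-(a * t)) * (V x₀).toReal : ℝ) : EReal)) :
    ⟪ξ, d⟫ ≤ 0 := by
  set c := (V x₀).toReal
  have hw : HasDerivWithinAt (fun t => Real.exp (-(a * t)) * c) (-a * c) (Set.Ici 0) 0 := by
    simpa using (((hasDerivAt_id (0 : ℝ)).const_mul a).neg.exp.mul_const c).hasDerivWithinAt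
  have hP : P = WithLp.toLp 2 (x 0, Real.exp (-(a * 0)) * c) := by
    rw [WithLp.ext_iff]
    ext <;> simp [hx0, ← hP1, ← hP2]
  have hnormal := inner_le_zero_of_mem_proxNormalCone_of_hasDerivWithinAt_prod (hP ▸ hξ)
    (fun t ht => (hEpi _).mpr (hlyap t ht)) hd hw
  have hZsnd : Z.snd = 0 := hZ2
  simpa [← hZ1, hZsnd] using hnormal

/-- If `ξ` is a singular (horizontal) proximal subgradient of `V` at `x₀`, i.e.
`(ξ, 0) ∈ N^P_{epi V}(x₀, V(x₀))`, and `x(·)` is a trajectory with `x(0) = x₀`,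
right derivative `d` at `0`, satisfying `V(x(t)) ≤ e^{−at}V(x₀)` for all `t ≥ 0`,
then `⟪ξ, d⟫ ≤ 0`. -/
theorem stmt16 {n : ℕ} (V : EuclideanSpace ℝ (Fin n) → EReal)
    (hlsc : LowerSemicontinuous V) (hbot : ∀ u, V u ≠ ⊥)
    (x₀ : EuclideanSpace ℝ (Fin n)) (hdom : V x₀ ≠ ⊤)
    (a : ℝ) (ha : 0 ≤ a)
    (Epi : Set (WithLp 2 (EuclideanSpace ℝ (Fin n) × ℝ)))
    (hEpi : ∀ q, q ∈ Epi ↔ V ((WithLp.equiv 2 _ q).1) ≤ (((WithLp.equiv 2 _ q).2 : ℝ) : EReal))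
    (P : WithLp 2 (EuclideanSpace ℝ (Fin n) × ℝ))
    (hP1 : (WithLp.equiv 2 _ P).1 = x₀) (hP2 : (WithLp.equiv 2 _ P).2 = (V x₀).toReal)
    (ξ : EuclideanSpace ℝ (Fin n))
    (Z : WithLp 2 (EuclideanSpace ℝ (Fin n) × ℝ))
    (hZ1 : (WithLp.equiv 2 _ Z).1 = ξ) (hZ2 : (WithLp.equiv 2 _ Z).2 = 0)
    (hξ : Z ∈ proxNormalCone Epi P)
    (x : ℝ → EuclideanSpace ℝ (Fin n)) (hx : Continuous x) (hx0 : x 0 = x₀)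
    (d : EuclideanSpace ℝ (Fin n)) (hd : HasDerivWithinAt x d (Set.Ici 0) 0)
    (hlyap : ∀ t : ℝ, 0 ≤ t →
      V (x t) ≤ ((Real.exp (-(a * t)) * (V x₀).toReal : ℝ) : EReal)) :
    ⟪ξ, d⟫ ≤ 0 :=
  stmt16_general V x₀ a Epi hEpi P hP1 hP2 ξ Z hZ1 hZ2 hξ x hx0 d hd hlyap
end
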